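/- Suppose m ≥ 2. Then for every unit r of R there exists a primitive vector v ∈ V with h(v,v) = r. -/

import Mathlib

open MulOpposite

/-- A `*`-hermitian form on a right `A`-module `V` (right modules are encoded as
modules over the opposite ring `Aᵐᵒᵖ`): it is additive and `A`-linear in the second
variable and satisfies `h v u = (h u v)*`. -/
structure HermitianForm (A V : Type*) [Ring A] [StarRing A] [AddCommGroup V]
    [Module Aᵐᵒᵖ V] where
  toFun : V → V → A
  add_right : ∀ u v w : V, toFun u (v + w) = toFun u v + toFun u w
  smul_right : ∀ (a : A) (u v : V), toFun u (op a • v) = toFun u v * a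
  conj_symm : ∀ u v : V, toFun v u = star (toFun u v)

namespace HermitianForm

variable {A V : Type*} [Ring A] [StarRing A] [AddCommGroup V] [Module Aᵐᵒᵖ V]

/-- Non-degeneracy: the map `u ↦ h u -` is a bijection of `V` onto the dual module. -/
def Nondeg (h : HermitianForm A V) : Prop :=
  ∀ φ : V →ₗ[Aᵐᵒᵖ] A, ∃! u : V, ∀ v : V, h.toFun u v = φ v

end HermitianForm

/-- A vector of the free module `V` of rank `m` is primitive if it belongs to a basis. -/
def IsPrimitive (A : Type*) {V : Type*} [Ring A] [AddCommGroup V] [Module Aᵐᵒᵖ V]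
    (m : ℕ) (v : V) : Prop :=
  ∃ (b : Module.Basis (Fin m) Aᵐᵒᵖ V) (i : Fin m), b i = v

/-!
Nondegeneracy and the invertibility of `2` give an anisotropic vector `w` (one with `h w w` a
unit), and, as `m ≥ 2`, a second anisotropic vector `w'` orthogonal to `w`. Their lengths are
units `d`, `e` of `R`. Since the residue field is finite of odd order, `d a² + e c² = r` is
solvable modulo the maximal ideal with `a` or `c` a unit, and the solution lifts to `R` because
square roots lift along `1 + 𝔪`. Then `v = w a + w' c` has length `r` and pairs to a unit with
`w` or `w'`; over a local ring such a vector has a unit coordinate, so a transvection moves a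
basis vector onto it.
-/

instance IsLocalRing.isDedekindFiniteMonoid {A : Type*} [Ring A] [IsLocalRing A] :
    IsDedekindFiniteMonoid A where
  mul_eq_one_symm {x y} hxy := by
    -- `y * x` is idempotent, and the only idempotents of a local ring are `0` and `1`.
    have he : IsIdempotentElem (y * x) := by
      rw [IsIdempotentElem, mul_assoc, ← mul_assoc x, hxy, one_mul]
    rcases IsLocalRing.isUnit_or_isUnit_of_add_one (add_sub_cancel (y * x) 1) with hu | hu
    · exact (IsIdempotentElem.iff_eq_one_of_isUnit hu).mp he
    · have hyx : y * x = 0 := by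
        simpa using (IsIdempotentElem.iff_eq_one_of_isUnit hu).mp he.one_sub
      refine absurd ?_ (one_ne_zero (α := A))
      calc (1 : A) = x * y * (x * y) := by rw [hxy, one_mul]
        _ = x * (y * x) * y := by simp only [mul_assoc]
        _ = 0 := by rw [hyx, mul_zero, zero_mul]

section Basis

variable {A V : Type*} [Ring A] [AddCommGroup V] [Module Aᵐᵒᵖ V]

theorem isPrimitive_of_isUnit_repr {m : ℕ} (b : Module.Basis (Fin m) Aᵐᵒᵖ V) {v : V}
    {i : Fin m} (hv : IsUnit (b.repr v i)) : IsPrimitive A m v := by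
  have hunit : IsUnit (1 + b.coord i (v - b i)) := by simpa using hv
  exact ⟨b.map (LinearEquiv.dilatransvection hunit), i, by
    simp [LinearEquiv.dilatransvection.apply]⟩

theorem Module.Basis.exists_isUnit_repr_of_isUnit_apply [IsLocalRing A] {ι : Type*} [Fintype ι]
    (b : Module.Basis ι Aᵐᵒᵖ V) (f : V →ₗ[Aᵐᵒᵖ] A) {v : V} (hv : IsUnit (f v)) :
    ∃ i, IsUnit (b.repr v i) := by
  rw [← b.sum_repr v, map_sum] at hv
  obtain ⟨i, -, hi⟩ := IsLocalRing.exists_of_isUnit_sum hv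
  rw [map_smul, MulOpposite.smul_eq_mul_unop] at hi
  exact ⟨i, isUnit_unop.mp (isUnit_of_mul_isUnit_right hi)⟩

end Basis

namespace HermitianForm

variable {A V : Type*} [Ring A] [StarRing A] [AddCommGroup V] [Module Aᵐᵒᵖ V]
  (h : HermitianForm A V)

def toLinearMap (u : V) : V →ₗ[Aᵐᵒᵖ] A where
  toFun := h.toFun u
  map_add' := h.add_right u
  map_smul' a v := by
    rw [← op_unop a, h.smul_right]
    rfl

@[simp] theorem toLinearMap_apply (u v : V) : h.toLinearMap u v = h.toFun u v := rfl

theorem add_left (u v w : V) : h.toFun (u + v) w = h.toFun u w + h.toFun v w := by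
  rw [h.conj_symm, h.add_right, star_add, ← h.conj_symm, ← h.conj_symm]

theorem smul_left (a : A) (u v : V) : h.toFun (op a • u) v = star a * h.toFun u v := by
  rw [h.conj_symm, h.smul_right, star_mul, ← h.conj_symm]

theorem star_apply_self (v : V) : star (h.toFun v v) = h.toFun v v :=
  (h.conj_symm v v).symm

theorem apply_eq_zero_comm {u v : V} (huv : h.toFun u v = 0) : h.toFun v u = 0 := by
  rw [h.conj_symm, huv, star_zero]

theorem apply_smul_add_smul_self {w w' : V} (hww' : h.toFun w w' = 0) (a c : A) :
    h.toFun (op a • w + op c • w') (op a • w + op c • w') =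
      star a * h.toFun w w * a + star c * h.toFun w' w' * c := by
  simp only [h.add_left, h.add_right, h.smul_left, h.smul_right, hww',
    h.apply_eq_zero_comm hww', mul_zero, zero_mul, add_zero, zero_add, mul_assoc]

theorem Nondeg.exists_apply_eq_repr {h : HermitianForm A V} (hnd : h.Nondeg) {ι : Type*}
    (b : Module.Basis ι Aᵐᵒᵖ V) (j : ι) : ∃ u, ∀ v, h.toFun u v = unop (b.repr v j) :=
  (hnd ((opLinearEquiv Aᵐᵒᵖ).symm.toLinearMap ∘ₗ b.coord j)).exists

variable [IsLocalRing A]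

theorem isPrimitive_of_isUnit_apply {m : ℕ} (b : Module.Basis (Fin m) Aᵐᵒᵖ V)
    {v u : V} (hvu : IsUnit (h.toFun v u)) : IsPrimitive A m v := by
  have huv : IsUnit (h.toLinearMap u v) := by
    rw [toLinearMap_apply, h.conj_symm]
    exact hvu.star
  obtain ⟨i, hi⟩ := b.exists_isUnit_repr_of_isUnit_apply _ huv
  exact isPrimitive_of_isUnit_repr b hi

/-- If neither `h x x` nor `h y y` is a unit, take `z = x + y q` with `q = (h x y)⁻¹`: then
`h z z - 2 = h x x + q* (h y y) q` is a nonunit, so `h z z` is a unit since `2` is. -/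
theorem exists_isUnit_apply_self_of_isUnit_apply (h2 : IsUnit (2 : A))
    {W : Submodule Aᵐᵒᵖ V} {x y : V} (hx : x ∈ W) (hy : y ∈ W) (hxy : IsUnit (h.toFun x y)) :
    ∃ z ∈ W, IsUnit (h.toFun z z) := by
  by_cases hxx : IsUnit (h.toFun x x)
  · exact ⟨x, hx, hxx⟩
  by_cases hyy : IsUnit (h.toFun y y)
  · exact ⟨y, hy, hyy⟩
  set q : A := ↑hxy.unit⁻¹
  have hq : h.toFun x y * q = 1 := hxy.mul_val_inv
  have hq' : star q * h.toFun y x = 1 := by rw [h.conj_symm x y, ← star_mul, hq, star_one]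
  refine ⟨x + op q • y, W.add_mem hx (W.smul_mem _ hy), ?_⟩
  have hz : h.toFun (x + op q • y) (x + op q • y) =
      2 + h.toFun x x + star q * h.toFun y y * q := by
    simp only [h.add_left, h.add_right, h.smul_left, h.smul_right, hq, ← mul_assoc, hq']
    rw [← one_add_one_eq_two]
    abel
  by_contra hzz
  have hyy' : ¬IsUnit (star q * h.toFun y y * q) := fun hu =>
    hyy (isUnit_of_mul_isUnit_right (isUnit_of_mul_isUnit_left hu))
  refine absurd h2 ?_
  have h2eq : (2 : A) = h.toFun (x + op q • y) (x + op q • y) + -h.toFun x x +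
      -(star q * h.toFun y y * q) := by
    rw [hz]; abel
  rw [h2eq]
  exact IsLocalRing.nonunits_add (IsLocalRing.nonunits_add hzz (by simpa using hxx))
    (by simpa using hyy')

theorem exists_isUnit_apply_self (h2 : IsUnit (2 : A)) (hnd : h.Nondeg) {ι : Type*}
    (b : Module.Basis ι Aᵐᵒᵖ V) (j : ι) : ∃ w, IsUnit (h.toFun w w) := by
  obtain ⟨u, hu⟩ := hnd.exists_apply_eq_repr b j
  have hunit : IsUnit (h.toFun u (b j)) := by simp [hu]
  obtain ⟨w, -, hw⟩ :=
    h.exists_isUnit_apply_self_of_isUnit_apply h2 Submodule.mem_top Submodule.mem_top hunit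
  exact ⟨w, hw⟩

/-- The vector dual to `b j` is orthogonal to `b k`, and it pairs to `1` with the projection
`b j - b k (h (b k) (b k))⁻¹ h (b k) (b j)` of `b j` onto the orthogonal complement of `b k`. -/
theorem exists_orthogonal_isUnit_apply_self (h2 : IsUnit (2 : A)) (hnd : h.Nondeg) {ι : Type*}
    (b : Module.Basis ι Aᵐᵒᵖ V) {j k : ι} (hjk : j ≠ k) (hk : IsUnit (h.toFun (b k) (b k))) :
    ∃ w, h.toFun (b k) w = 0 ∧ IsUnit (h.toFun w w) := by
  let W := LinearMap.ker (h.toLinearMap (b k))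
  obtain ⟨u, hu⟩ := hnd.exists_apply_eq_repr b j
  have huW : u ∈ W := by
    simp only [W, LinearMap.mem_ker, toLinearMap_apply]
    exact h.apply_eq_zero_comm (by simp [hu, Finsupp.single_eq_of_ne hjk])
  set y := b j + op (-(↑hk.unit⁻¹ * h.toFun (b k) (b j))) • b k
  have hyW : y ∈ W := by
    simp only [W, y, LinearMap.mem_ker, toLinearMap_apply, h.add_right, h.smul_right, mul_neg,
      ← mul_assoc, hk.mul_val_inv, one_mul, add_neg_cancel]
  have huy : h.toFun u y = 1 := by
    simp [y, h.add_right, hu, Finsupp.single_eq_of_ne hjk]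
  exact h.exists_isUnit_apply_self_of_isUnit_apply h2 huW hyW (huy ▸ isUnit_one)

theorem isPrimitive_smul_add_smul {m : ℕ} (b : Module.Basis (Fin m) Aᵐᵒᵖ V) {w w' : V}
    (hww' : h.toFun w w' = 0) (hw : IsUnit (h.toFun w w)) (hw' : IsUnit (h.toFun w' w'))
    {a c : A} (hac : IsUnit a ∨ IsUnit c) : IsPrimitive A m (op a • w + op c • w') := by
  rcases hac with ha | hc
  · refine h.isPrimitive_of_isUnit_apply b (u := w) ?_
    rw [h.add_left, h.smul_left, h.smul_left, h.apply_eq_zero_comm hww', mul_zero, add_zero]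
    exact ha.star.mul hw
  · refine h.isPrimitive_of_isUnit_apply b (u := w') ?_
    rw [h.add_left, h.smul_left, h.smul_left, hww', mul_zero, zero_add]
    exact hc.star.mul hw'

end HermitianForm

open Polynomial in
theorem FiniteField.exists_mul_sq_add_mul_sq_eq {K : Type*} [Field K] [Fintype K]
    (hK : Fintype.card K % 2 = 1) {d e : K} (hd : d ≠ 0) (he : e ≠ 0) (r : K) :
    ∃ x y : K, d * x ^ 2 + e * y ^ 2 = r := by
  obtain ⟨x, y, hxy⟩ := FiniteField.exists_root_sum_quadratic
    (f := C d * X ^ 2) (g := C e * X ^ 2 - C r) (degree_C_mul_X_pow 2 hd)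
    (by
      rw [degree_sub_C (by rw [degree_C_mul_X_pow 2 he]; norm_num), degree_C_mul_X_pow 2 he]
      rfl) hK
  refine ⟨x, y, ?_⟩
  simp only [eval_sub, eval_mul, eval_C, eval_pow, eval_X] at hxy
  linear_combination hxy

section LocalRing

open IsLocalRing

variable {R : Type*} [CommRing R] [IsLocalRing R]

theorem IsLocalRing.isUnit_one_add_of_mem_maximalIdeal {y : R} (hy : y ∈ maximalIdeal R) :
    IsUnit (1 + y) := by
  simpa using isUnit_one_sub_self_of_mem_nonunits (-y) (by simpa using hy)

theorem exists_isUnit_sq_mul_eq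
    (hsq : ∀ x ∈ maximalIdeal R, ∃ y ∈ maximalIdeal R, (1 + y) ^ 2 = 1 + x)
    {s t : R} (ht : IsUnit t) (hst : s - t ∈ maximalIdeal R) :
    ∃ c, IsUnit c ∧ c ^ 2 * t = s := by
  obtain ⟨y, hy, hy2⟩ := hsq ((s - t) * ↑ht.unit⁻¹) (Ideal.mul_mem_right _ _ hst)
  refine ⟨1 + y, isUnit_one_add_of_mem_maximalIdeal hy, ?_⟩
  rw [hy2, add_mul, mul_assoc, ht.val_inv_mul]
  ring

theorem exists_isUnit_mul_sq_add_mul_sq_eq_of_residue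
    (hsq : ∀ x ∈ maximalIdeal R, ∃ y ∈ maximalIdeal R, (1 + y) ^ 2 = 1 + x)
    {d e r a₀ c : R} (hd : IsUnit d) (ha₀ : IsUnit a₀)
    (hres : residue R (d * a₀ ^ 2 + e * c ^ 2) = residue R r) :
    ∃ a, IsUnit a ∧ d * a ^ 2 + e * c ^ 2 = r := by
  have hmem : r - e * c ^ 2 - d * a₀ ^ 2 ∈ maximalIdeal R := by
    rw [← residue_eq_zero_iff, map_sub, map_sub, ← hres, map_add]
    ring
  obtain ⟨t, ht, hteq⟩ := exists_isUnit_sq_mul_eq hsq (hd.mul (ha₀.pow 2)) hmem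
  exact ⟨t * a₀, ht.mul ha₀, by linear_combination hteq⟩

theorem exists_mul_sq_add_mul_sq_eq [Finite (ResidueField R)]
    (hodd : Odd (Nat.card (ResidueField R)))
    (hsq : ∀ x ∈ maximalIdeal R, ∃ y ∈ maximalIdeal R, (1 + y) ^ 2 = 1 + x)
    {d e r : R} (hd : IsUnit d) (he : IsUnit e) (hr : IsUnit r) :
    ∃ a c : R, (IsUnit a ∨ IsUnit c) ∧ d * a ^ 2 + e * c ^ 2 = r := by
  have := Fintype.ofFinite (ResidueField R)
  obtain ⟨x, y, hxy⟩ := FiniteField.exists_mul_sq_add_mul_sq_eq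
    (by rw [← Nat.card_eq_fintype_card]; exact Nat.odd_iff.mp hodd)
    (hd.map (residue R)).ne_zero (he.map (residue R)).ne_zero (residue R r)
  obtain ⟨a₀, rfl⟩ := residue_surjective x
  obtain ⟨c₀, rfl⟩ := residue_surjective y
  have hres : residue R (d * a₀ ^ 2 + e * c₀ ^ 2) = residue R r := by
    simpa only [map_add, map_mul, map_pow] using hxy
  have hac₀ : IsUnit a₀ ∨ IsUnit c₀ := by
    simp only [← residue_ne_zero_iff_isUnit]
    by_contra! h0
    refine (residue_ne_zero_iff_isUnit r).mpr hr ?_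
    rw [← hxy, h0.1, h0.2]
    ring
  rcases hac₀ with ha₀ | hc₀
  · obtain ⟨a, ha, hsum⟩ := exists_isUnit_mul_sq_add_mul_sq_eq_of_residue hsq hd ha₀ hres
    exact ⟨a, c₀, Or.inl ha, hsum⟩
  · rw [add_comm] at hres
    obtain ⟨c, hc, hsum⟩ := exists_isUnit_mul_sq_add_mul_sq_eq_of_residue hsq he hc₀ hres
    exact ⟨a₀, c, Or.inr hc, by linear_combination hsum⟩

end LocalRing

/-- The inverse of a unit fixed by `*` is fixed by `*`, hence comes from `R`. -/
theorem isUnit_of_isUnit_algebraMap {R A : Type*} [CommRing R] [Ring A] [StarRing A]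
    [Algebra R A] (hinj : Function.Injective (algebraMap R A))
    (hfix : ∀ a : A, star a = a ↔ a ∈ Set.range (algebraMap R A)) {s : R}
    (hs : IsUnit (algebraMap R A s)) : IsUnit s := by
  have hstar : star (algebraMap R A s) = algebraMap R A s := (hfix _).mpr ⟨s, rfl⟩
  have hinv : star (↑hs.unit⁻¹ : A) = ↑hs.unit⁻¹ := by
    have h1 : star (algebraMap R A s * ↑hs.unit⁻¹) = 1 := by rw [hs.mul_val_inv, star_one]
    rw [star_mul, hstar] at h1
    exact (Units.inv_eq_of_mul_eq_one_left h1).symm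
  obtain ⟨t, ht⟩ := (hfix _).mp hinv
  refine IsUnit.of_mul_eq_one t (hinj ?_)
  rw [map_mul, map_one, ht, hs.mul_val_inv]

theorem stmt_8_general {A V : Type*} [Ring A] [StarRing A] [IsLocalRing A]
    [AddCommGroup V] [Module Aᵐᵒᵖ V]
    (h2 : IsUnit (2 : A))
    (R : Type*) [CommRing R] [IsLocalRing R] [Algebra R A]
    (hinj : Function.Injective (algebraMap R A))
    (hfix : ∀ a : A, star a = a ↔ a ∈ Set.range (algebraMap R A))
    [Finite (IsLocalRing.ResidueField R)]
    (hodd : Odd (Nat.card (IsLocalRing.ResidueField R)))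
    (hsq : ∀ x ∈ IsLocalRing.maximalIdeal R,
      ∃ y ∈ IsLocalRing.maximalIdeal R, (1 + y) ^ 2 = 1 + x)
    (m : ℕ) (hm : 2 ≤ m) (b : Module.Basis (Fin m) Aᵐᵒᵖ V)
    (h : HermitianForm A V) (hnd : h.Nondeg) :
    ∀ r : R, IsUnit r →
      ∃ v : V, IsPrimitive A m v ∧ h.toFun v v = algebraMap R A r := by
  intro r hr
  have hstar (s : R) : star (algebraMap R A s) = algebraMap R A s := (hfix _).mpr ⟨s, rfl⟩
  obtain ⟨w, hw⟩ := h.exists_isUnit_apply_self h2 hnd b ⟨0, by omega⟩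
  obtain ⟨B, k, rfl⟩ := h.isPrimitive_of_isUnit_apply b hw
  have : Nontrivial (Fin m) := Fin.nontrivial_iff_two_le.mpr hm
  obtain ⟨j, hjk⟩ := exists_ne k
  obtain ⟨w', hw'k, hw'⟩ := h.exists_orthogonal_isUnit_apply_self h2 hnd B hjk hw
  obtain ⟨d, hd⟩ := (hfix _).mp (h.star_apply_self (B k))
  obtain ⟨e, he⟩ := (hfix _).mp (h.star_apply_self w')
  obtain ⟨a, c, hac, hsum⟩ := exists_mul_sq_add_mul_sq_eq hodd hsq
    (isUnit_of_isUnit_algebraMap hinj hfix (hd ▸ hw))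
    (isUnit_of_isUnit_algebraMap hinj hfix (he ▸ hw')) hr
  refine ⟨op (algebraMap R A a) • B k + op (algebraMap R A c) • w',
    h.isPrimitive_smul_add_smul b hw'k hw hw' (hac.imp (·.map _) (·.map _)), ?_⟩
  rw [h.apply_smul_add_smul_self hw'k, hstar, hstar, ← hd, ← he]
  simp only [← map_mul, ← map_add]
  congr 1
  linear_combination hsum

/-- Proposition 3.4: if `m ≥ 2` then every unit of the fixed ring `R` is the length
of some primitive vector. -/
theorem stmt_8 {A V : Type*} [Ring A] [StarRing A] [IsLocalRing A]
    [AddCommGroup V] [Module Aᵐᵒᵖ V]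
    (hcent : ∀ a : A, star a = a → a ∈ Set.center A)
    (h2 : IsUnit (2 : A))
    (R : Type*) [CommRing R] [IsLocalRing R] [Algebra R A]
    (hinj : Function.Injective (algebraMap R A))
    (hfix : ∀ a : A, star a = a ↔ a ∈ Set.range (algebraMap R A))
    [Finite (IsLocalRing.ResidueField R)]
    (hodd : Odd (Nat.card (IsLocalRing.ResidueField R)))
    (hsq : ∀ x ∈ IsLocalRing.maximalIdeal R,
      ∃ y ∈ IsLocalRing.maximalIdeal R, (1 + y) ^ 2 = 1 + x)
    (m : ℕ) (hm : 2 ≤ m) (b : Module.Basis (Fin m) Aᵐᵒᵖ V)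
    (h : HermitianForm A V) (hnd : h.Nondeg) :
    ∀ r : R, IsUnit r →
      ∃ v : V, IsPrimitive A m v ∧ h.toFun v v = algebraMap R A r :=
  stmt_8_general h2 R hinj hfix hodd hsq m hm b h hnd
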